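/- The map F(a,b) → Z sending a word w with closed lattice path in Z² (i.e., trivial abelianization) to its signed enclosed area is a group homomorphism from the kernel of the abelianization map F(a,b) → Z² to Z, and it sends the commutator [a,b] = aba⁻¹b⁻¹ to 1. -/

import Mathlib

def step : Fin 2 × Bool → ℤ × ℤ
  | (i, b) =>
      let s : ℤ := if b then 1 else -1
      if i = 0 then (s, 0) else (0, s)

/-- Endpoint of the lattice path traced by a word (its abelianized image in `ℤ²`). -/
def endpoint (l : List (Fin 2 × Bool)) : ℤ × ℤ := (l.map step).sum

/-- Shoelace-formula signed area of the lattice path of a word, starting at `p`. -/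
def areaFrom : ℤ × ℤ → List (Fin 2 × Bool) → ℚ
  | _, [] => 0
  | p, s :: rest =>
      let q := p + step s
      ((p.1 * q.2 - q.1 * p.2 : ℤ) : ℚ) / 2 + areaFrom q rest

def pathArea (l : List (Fin 2 × Bool)) : ℚ := areaFrom (0, 0) l

open scoped commutatorElement

/-!
The shoelace area is additive under concatenation of paths, provided the second path starts where
the first ends; for a closed first path that is the origin again, which gives additivity on the
kernel. A step immediately followed by its inverse contributes two opposite shoelace terms, so the
area is invariant under free reduction and hence well defined on `F(a,b)`. Finally, the shoelace
term of a unit step differs from half the increment of `x * y` by an integer, so the area of a path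
is an integer plus half the change of `x * y` between its ends, which vanishes on closed paths.
-/

lemma step_not (x : Fin 2) (b : Bool) : step (x, !b) = -step (x, b) := by
  fin_cases x <;> cases b <;> simp [step]

lemma endpoint_cons (s : Fin 2 × Bool) (l : List (Fin 2 × Bool)) :
    endpoint (s :: l) = step s + endpoint l := by
  simp [endpoint]

lemma areaFrom_cons (p : ℤ × ℤ) (s : Fin 2 × Bool) (l : List (Fin 2 × Bool)) :
    areaFrom p (s :: l) =
      ((p.1 * (p + step s).2 - (p + step s).1 * p.2 : ℤ) : ℚ) / 2 + areaFrom (p + step s) l :=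
  rfl

lemma areaFrom_append (l₁ l₂ : List (Fin 2 × Bool)) (p : ℤ × ℤ) :
    areaFrom p (l₁ ++ l₂) = areaFrom p l₁ + areaFrom (p + endpoint l₁) l₂ := by
  induction l₁ generalizing p with
  | nil => simp [areaFrom, endpoint]
  | cons s t ih =>
    rw [List.cons_append, areaFrom_cons, areaFrom_cons, ih, endpoint_cons, add_assoc, add_assoc]

lemma areaFrom_cons_cons_not (p : ℤ × ℤ) (x : Fin 2) (b : Bool) (l : List (Fin 2 × Bool)) :
    areaFrom p ((x, b) :: (x, !b) :: l) = areaFrom p l := by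
  rw [areaFrom_cons, areaFrom_cons, step_not, add_neg_cancel_right]
  push_cast
  ring

lemma areaFrom_eq_of_red {l₁ l₂ : List (Fin 2 × Bool)} (h : FreeGroup.Red l₁ l₂) (p : ℤ × ℤ) :
    areaFrom p l₁ = areaFrom p l₂ := by
  induction h with
  | refl => rfl
  | tail _ hstep ih =>
    obtain ⟨⟩ := hstep
    rw [ih, areaFrom_append, areaFrom_append, areaFrom_cons_cons_not]

lemma areaFrom_toWord_mul (w v : FreeGroup (Fin 2)) (p : ℤ × ℤ) :
    areaFrom p (w * v).toWord = areaFrom p w.toWord + areaFrom (p + endpoint w.toWord) v.toWord := by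
  rw [FreeGroup.toWord_mul, ← areaFrom_eq_of_red FreeGroup.reduce.red, areaFrom_append]

lemma step_fst_mul_snd (s : Fin 2 × Bool) : (step s).1 * (step s).2 = 0 := by
  obtain ⟨x, b⟩ := s
  fin_cases x <;> cases b <;> simp [step]

lemma even_shoelace_sub_mul_sub (p e : ℤ × ℤ) (he : e.1 * e.2 = 0) :
    Even ((p.1 * (p + e).2 - (p + e).1 * p.2) - ((p + e).1 * (p + e).2 - p.1 * p.2)) :=
  ⟨-(e.1 * p.2), by simp only [Prod.fst_add, Prod.snd_add]; linear_combination -he⟩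

lemma exists_areaFrom_eq_int_add (l : List (Fin 2 × Bool)) (p : ℤ × ℤ) :
    ∃ k : ℤ, areaFrom p l =
      k + (((p + endpoint l).1 * (p + endpoint l).2 - p.1 * p.2 : ℤ) : ℚ) / 2 := by
  induction l generalizing p with
  | nil => exact ⟨0, by simp [areaFrom, endpoint]⟩
  | cons s t ih =>
    obtain ⟨j, hj⟩ := even_shoelace_sub_mul_sub p (step s) (step_fst_mul_snd s)
    obtain ⟨k, hk⟩ := ih (p + step s)
    refine ⟨j + k, ?_⟩
    rw [areaFrom_cons, hk, endpoint_cons, ← add_assoc p, eq_add_of_sub_eq hj]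
    push_cast
    ring

/-- On the kernel of the abelianization `F(a,b) → ℤ²` (words with closed lattice paths),
the signed enclosed area is an integer-valued group homomorphism to `ℤ`, sending the
commutator `[a,b] = aba⁻¹b⁻¹` to `1`. -/
theorem area_hom_on_kernel :
    (∀ w : FreeGroup (Fin 2), endpoint w.toWord = (0, 0) →
        ∃ n : ℤ, pathArea w.toWord = (n : ℚ)) ∧
    (∀ w v : FreeGroup (Fin 2), endpoint w.toWord = (0, 0) →
        endpoint v.toWord = (0, 0) →
        pathArea (w * v).toWord = pathArea w.toWord + pathArea v.toWord) ∧
    pathArea (⁅FreeGroup.of (0 : Fin 2), FreeGroup.of (1 : Fin 2)⁆ :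
        FreeGroup (Fin 2)).toWord = 1 := by
  refine ⟨fun w hw => ?_, fun w v hw _ => ?_, ?_⟩
  · obtain ⟨k, hk⟩ := exists_areaFrom_eq_int_add w.toWord (0, 0)
    exact ⟨k, by simpa [pathArea, hw] using hk⟩
  · simp only [pathArea, areaFrom_toWord_mul, hw, Prod.mk_add_mk, add_zero]
  · have hword : (⁅FreeGroup.of (0 : Fin 2), FreeGroup.of (1 : Fin 2)⁆ :
        FreeGroup (Fin 2)).toWord = [(0, true), (1, true), (0, false), (1, false)] := by
      decide
    norm_num [hword, pathArea, areaFrom, step]
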